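/- Let r ≥ 2 and let s ∈ ℂ with Re s > 1. Then ζ_{r−1}(s,…,s) · ζ(s) = r · ζ_r(s,…,s) + Σ_{i=1}^{r−1} ζ_{r−1}(s,…,s, 2s, s,…,s), where in the i-th summand the argument 2s occupies the i-th position among the r−1 variables. -/

import Mathlib

/-!
Write `ζ_k(s,…,s) ζ(s)` as the sum of `m₁^{-s} ⋯ m_k^{-s} t^{-s}` over increasing `m` and all
`t ≥ 1`. If `t = m_i`, the pair contributes to the `i`-th series with `2s` in place `i`.
Otherwise there is exactly one position `i ∈ {0,…,k}` at which `t` can be inserted into `m` to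
give an increasing `(k+1)`-tuple. For each fixed position `i`, the pairs admitting insertion at `i`
correspond bijectively to the increasing `(k+1)`-tuples (remove the `i`-th entry), so summing over
the `k+1` positions produces `(k+1) ζ_{k+1}(s,…,s)`. Absolute convergence for `Re s > 1` justifies
the rearrangements.
-/

/-- The Euler–Zagier `r`-ple zeta-function, defined by its multiple series
`ζ_r(s) = ∑_{0 < m₁ < ⋯ < m_r} m₁^{-s₁} ⋯ m_r^{-s_r}`, written via the substitution
`m_j = n₁ + ⋯ + n_j` with `n : Fin r → ℕ+`. -/
noncomputable def eulerZagierZeta {r : ℕ} (s : Fin r → ℂ) : ℂ :=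
  ∑' n : Fin r → ℕ+, ∏ j : Fin r, (((∑ i ∈ Finset.Iic j, (n i : ℕ)) : ℂ) ^ (-(s j)))

open Finset Function

section PartialSums

variable {ι M : Type*} [LinearOrder ι] [LocallyFiniteOrderBot ι]

theorem Finset.sum_Iic_eq_add_sum_Iio [AddCommMonoid M] (n : ι → M) (j : ι) :
    ∑ i ∈ Iic j, n i = n j + ∑ i ∈ Iio j, n i := by
  rw [← Iio_insert, sum_insert notMem_Iio_self]

theorem injective_sum_Iic [WellFoundedLT ι] [AddCancelCommMonoid M] :
    Injective fun (n : ι → M) j => ∑ i ∈ Iic j, n i := by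
  intro n n' h
  funext j
  induction j using WellFoundedLT.induction with
  | _ j ih =>
  have hj := congrFun h j
  simp only [Finset.sum_Iic_eq_add_sum_Iio] at hj
  rwa [sum_congr rfl fun i hi => ih i (mem_Iio.1 hi), add_left_inj] at hj

theorem exists_pnat_sum_Iic_eq [PredOrder ι] [WellFoundedLT ι] {m : ι → ℕ+}
    (hm : StrictMono m) : ∃ n : ι → ℕ+, ∀ j, ∑ i ∈ Iic j, (n i : ℕ) = m j := by
  classical
  let prev : ι → ℕ := fun j => if IsMin j then 0 else m (Order.pred j)
  have hprev : ∀ j, prev j < m j := by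
    intro j
    by_cases hj : IsMin j
    · simp [prev, hj]
    · simpa [prev, hj] using hm (Order.pred_lt_of_not_isMin hj)
  refine ⟨fun j => ⟨m j - prev j, Nat.sub_pos_of_lt (hprev j)⟩, fun j => ?_⟩
  induction j using WellFoundedLT.induction with
  | _ j ih =>
  rw [Finset.sum_Iic_eq_add_sum_Iio]
  by_cases hj : IsMin j
  · simp [prev, hj]
  · rw [← Iic_pred_eq_Iio_of_not_isMin hj, ih _ (Order.pred_lt_of_not_isMin hj)]
    have := hprev j
    simp only [PNat.mk_coe, prev, hj, if_false] at this ⊢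
    omega

end PartialSums

section Insertion

variable {α : Type*} [LinearOrder α] {k : ℕ} {m : Fin k → α} {t : α}

theorem StrictMono.of_insertNth {i : Fin (k + 1)} (h : StrictMono (i.insertNth t m)) :
    StrictMono m := by
  simpa using h.comp (Fin.strictMono_succAbove i)

theorem not_strictMono_insertNth_of_mem_range (ht : t ∈ Set.range m) (i : Fin (k + 1)) :
    ¬StrictMono (i.insertNth t m) := by
  obtain ⟨j, rfl⟩ := ht
  exact fun h => Fin.succAbove_ne i j (h.injective (by simp))

theorem existsUnique_strictMono_insertNth (hm : StrictMono m) (ht : t ∉ Set.range m) :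
    ∃! i : Fin (k + 1), StrictMono (i.insertNth t m) := by
  classical
  have hcard : #(insert t (univ.image m)) = k + 1 := by
    rw [card_insert_of_notMem (by simpa using ht), card_image_of_injective _ hm.injective,
      card_fin]
  set f := (insert t (univ.image m)).orderEmbOfFin hcard
  have hf : Set.range f = insert t (Set.range m) := by simp [f]
  obtain ⟨i, hi⟩ : t ∈ Set.range f := hf ▸ Set.mem_insert t _
  refine ⟨i, ?_, fun i' hi' => f.injective ?_⟩
  · have hrem : Fin.removeNth i f = m := by
      refine ((f.strictMono.comp (Fin.strictMono_succAbove i)).range_inj hm).1 ?_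
      have hnot : t ∉ Set.range (Fin.removeNth i f) := by
        rintro ⟨j, hj⟩
        exact Fin.succAbove_ne i j (f.injective (hj.trans hi.symm))
      have h := congrArg Set.range (Fin.insertNth_self_removeNth i f)
      rw [Fin.range_insertNth, hf, hi] at h
      change Set.range (Fin.removeNth i f) = _
      rw [← Set.insert_sdiff_self_of_notMem hnot, ← Set.insert_sdiff_self_of_notMem ht]
      exact congrArg (· \ {t}) h
    have hfi : i.insertNth t m = f := by rw [← hrem, ← hi, Fin.insertNth_self_removeNth]
    show StrictMono (i.insertNth t m)
    exact hfi ▸ f.strictMono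
  · have hfi' : i'.insertNth t m = f :=
      (hi'.range_inj f.strictMono).1 (by rw [Fin.range_insertNth, hf]; rfl)
    rw [hi, ← hfi']
    simp

theorem indicator_strictMono_fst_eq_sum {M : Type*} [AddCommMonoid M]
    (F : (Fin k → α) × α → M) (p : (Fin k → α) × α) :
    {p | StrictMono p.1}.indicator F p =
      ∑ i : Fin (k + 1), {p | StrictMono (i.insertNth p.2 p.1)}.indicator F p +
        ∑ i : Fin k, {p | StrictMono p.1 ∧ p.2 = p.1 i}.indicator F p := by
  classical
  obtain ⟨m, t⟩ := p
  simp only [Set.indicator_apply, Set.mem_ofPred_eq]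
  by_cases hm : StrictMono m
  · by_cases ht : t ∈ Set.range m
    · obtain ⟨j, rfl⟩ := ht
      rw [sum_eq_zero fun i _ => if_neg (not_strictMono_insertNth_of_mem_range ⟨j, rfl⟩ i),
        Fintype.sum_eq_single j fun i hi => if_neg fun h => hi (hm.injective h.2.symm),
        if_pos hm, if_pos ⟨hm, rfl⟩, zero_add]
    · obtain ⟨i, hi, huniq⟩ := existsUnique_strictMono_insertNth hm ht
      rw [Fintype.sum_eq_single i fun i' hi' => if_neg fun h => hi' (huniq i' h),
        sum_eq_zero fun j _ => if_neg fun h => ht ⟨j, h.2.symm⟩, if_pos hm, if_pos hi, add_zero]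
  · rw [if_neg hm, sum_eq_zero fun i _ => if_neg fun h => hm h.of_insertNth,
      sum_eq_zero fun i _ => if_neg fun h => hm h.1, add_zero]

end Insertion

theorem summable_prod_fin_of_nonneg {β : Type*} {f : β → ℝ} (hf : Summable f) (hf0 : 0 ≤ f) :
    ∀ r : ℕ, Summable fun m : Fin r → β => ∏ j, f (m j)
  | 0 => (hasSum_fintype _).summable
  | r + 1 => by
    rw [← (Fin.consEquiv fun _ => β).summable_iff]
    simpa [comp_def, Fin.prod_univ_succ] using
      hf.mul_of_nonneg (summable_prod_fin_of_nonneg hf hf0 r) hf0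
        fun _ => prod_nonneg fun j _ => hf0 _

theorem summable_pnat_rpow_neg {σ : ℝ} (hσ : 1 < σ) :
    Summable fun t : ℕ+ => ((t : ℕ) : ℝ) ^ (-σ) :=
  (Real.summable_nat_rpow.2 (by linarith)).comp_injective PNat.coe_injective

theorem norm_pnat_cpow (t : ℕ+) (w : ℂ) : ‖((t : ℕ) : ℂ) ^ w‖ = ((t : ℕ) : ℝ) ^ w.re :=
  Complex.norm_natCast_cpow_of_pos t.pos w

theorem riemannZeta_eq_tsum_pnat {s : ℂ} (hs : 1 < s.re) :
    riemannZeta s = ∑' t : ℕ+, ((t : ℕ) : ℂ) ^ (-s) := by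
  rw [zeta_eq_tsum_one_div_nat_add_one_cpow hs,
    tsum_pnat_eq_tsum_succ (f := fun t => (t : ℂ) ^ (-s))]
  simp [Complex.cpow_neg]

noncomputable def eulerZagierTerm {r : ℕ} (s : Fin r → ℂ) (m : Fin r → ℕ+) : ℂ :=
  ∏ j, ((m j : ℕ) : ℂ) ^ (-s j)

/-- The definition sums over the gaps `n`; their partial sums run exactly once through the
increasing tuples `m`. -/
theorem eulerZagierZeta_eq_tsum_indicator {r : ℕ} (s : Fin r → ℂ) :
    eulerZagierZeta s = ∑' m : Fin r → ℕ+, {m | StrictMono m}.indicator (eulerZagierTerm s) m := by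
  let g : (Fin r → ℕ+) → Fin r → ℕ+ := fun n j =>
    ⟨∑ i ∈ Iic j, (n i : ℕ), sum_pos (fun i _ => (n i).pos) nonempty_Iic⟩
  have hg : Injective g := fun n n' h =>
    (injective_sum_Iic.comp (Pi.map_injective.2 fun _ => PNat.coe_injective))
      (funext fun j => congrArg PNat.val (congrFun h j))
  have hg_mono : ∀ n, StrictMono (g n) := fun n a b hab =>
    sum_lt_sum_of_subset (Iic_subset_Iic.2 hab.le) (mem_Iic.2 le_rfl)
      (by simpa using hab.not_ge) (n b).pos fun _ _ _ => Nat.zero_le _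
  have hsupp : support ({m | StrictMono m}.indicator (eulerZagierTerm s)) ⊆ Set.range g := by
    intro m hm
    obtain ⟨n, hn⟩ := exists_pnat_sum_Iic_eq (Set.mem_of_indicator_ne_zero hm)
    exact ⟨n, funext fun j => PNat.coe_injective (hn j)⟩
  rw [← hg.tsum_eq hsupp, eulerZagierZeta]
  refine tsum_congr fun n => ?_
  rw [Set.indicator_of_mem (hg_mono n), eulerZagierTerm]
  simp only [g, PNat.mk_coe, Nat.cast_sum]

theorem eulerZagierTerm_insertNth {k : ℕ} (s : Fin (k + 1) → ℂ) (i : Fin (k + 1)) (t : ℕ+)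
    (m : Fin k → ℕ+) :
    eulerZagierTerm s (i.insertNth t m) =
      eulerZagierTerm (fun j => s (i.succAbove j)) m * ((t : ℕ) : ℂ) ^ (-s i) := by
  rw [eulerZagierTerm, Fin.prod_univ_succAbove _ i, mul_comm]
  simp [eulerZagierTerm]

theorem eulerZagierTerm_update_add {r : ℕ} (s : Fin r → ℂ) (i : Fin r) (w : ℂ)
    (m : Fin r → ℕ+) :
    eulerZagierTerm (update s i (s i + w)) m = eulerZagierTerm s m * ((m i : ℕ) : ℂ) ^ (-w) := by
  classical
  simp only [eulerZagierTerm, ← mul_prod_erase univ _ (mem_univ i), update_self]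
  rw [prod_congr rfl fun j hj => by rw [update_of_ne (ne_of_mem_erase hj)], neg_add,
    Complex.cpow_add _ _ (by exact_mod_cast (m i).ne_zero)]
  ring

theorem summable_norm_eulerZagierTerm_const {s : ℂ} (hs : 1 < s.re) (r : ℕ) :
    Summable fun m : Fin r → ℕ+ => ‖eulerZagierTerm (fun _ => s) m‖ := by
  simpa [eulerZagierTerm, norm_prod, norm_pnat_cpow] using
    summable_prod_fin_of_nonneg (summable_pnat_rpow_neg hs) (fun _ => by positivity) r

section Pairs

variable {k : ℕ} (s : ℂ)

noncomputable def zetaProductTerm (p : (Fin k → ℕ+) × ℕ+) : ℂ :=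
  eulerZagierTerm (fun _ => s) p.1 * ((p.2 : ℕ) : ℂ) ^ (-s)

variable {s}

theorem summable_zetaProductTerm (hs : 1 < s.re) : Summable (zetaProductTerm (k := k) s) := by
  refine Summable.of_norm ?_
  simpa [zetaProductTerm, norm_pnat_cpow] using
    (summable_norm_eulerZagierTerm_const hs k).mul_of_nonneg (summable_pnat_rpow_neg hs)
      (fun _ => norm_nonneg _) fun _ => by positivity

theorem eulerZagierZeta_mul_riemannZeta_eq_tsum (hs : 1 < s.re) :
    eulerZagierZeta (fun _ : Fin k => s) * riemannZeta s =
      ∑' p, {p : (Fin k → ℕ+) × ℕ+ | StrictMono p.1}.indicator (zetaProductTerm s) p := by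
  have hterm : Summable fun m : Fin k → ℕ+ =>
      ‖{m | StrictMono m}.indicator (eulerZagierTerm fun _ => s) m‖ :=
    (summable_norm_eulerZagierTerm_const hs k).of_nonneg_of_le (fun _ => norm_nonneg _)
      fun _ => norm_indicator_le_norm_self _ _
  have hzeta : Summable fun t : ℕ+ => ‖((t : ℕ) : ℂ) ^ (-s)‖ := by
    simpa [norm_pnat_cpow] using summable_pnat_rpow_neg hs
  rw [eulerZagierZeta_eq_tsum_indicator, riemannZeta_eq_tsum_pnat hs,
    tsum_mul_tsum_of_summable_norm hterm hzeta]
  refine tsum_congr fun p => ?_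
  simp only [Set.indicator_apply, Set.mem_ofPred_eq]
  split_ifs <;> simp [zetaProductTerm]

theorem eulerZagierZeta_succ_eq_tsum_insertNth (i : Fin (k + 1)) :
    eulerZagierZeta (fun _ : Fin (k + 1) => s) =
      ∑' p, {p : (Fin k → ℕ+) × ℕ+ | StrictMono (i.insertNth p.2 p.1)}.indicator
        (zetaProductTerm s) p := by
  rw [eulerZagierZeta_eq_tsum_indicator,
    ← ((Equiv.prodComm _ _).trans (Fin.insertNthEquiv (fun _ => ℕ+) i)).tsum_eq]
  refine tsum_congr fun p => ?_
  change {m | StrictMono m}.indicator _ (i.insertNth p.2 p.1) = _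
  simp only [Set.indicator_apply, Set.mem_ofPred_eq, eulerZagierTerm_insertNth, zetaProductTerm]

theorem eulerZagierZeta_update_eq_tsum (i : Fin k) :
    eulerZagierZeta (update (fun _ : Fin k => s) i (2 * s)) =
      ∑' p, {p : (Fin k → ℕ+) × ℕ+ | StrictMono p.1 ∧ p.2 = p.1 i}.indicator
        (zetaProductTerm s) p := by
  have hg : Injective fun m : Fin k → ℕ+ => (m, m i) := fun _ _ h => congrArg Prod.fst h
  rw [eulerZagierZeta_eq_tsum_indicator, ← hg.tsum_eq]
  · refine tsum_congr fun m => ?_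
    simp only [Set.indicator_apply, Set.mem_ofPred_eq, and_true, zetaProductTerm, two_mul]
    rw [← eulerZagierTerm_update_add (fun _ => s) i s]
  · rintro ⟨m, t⟩ h
    have ht : t = m i := (Set.mem_of_indicator_ne_zero h).2
    exact ⟨m, by rw [ht]⟩

end Pairs

theorem statement6_general (k : ℕ) (s : ℂ) (hs : 1 < s.re) :
    eulerZagierZeta (fun _ : Fin k => s) * riemannZeta s =
      ((k : ℂ) + 1) * eulerZagierZeta (fun _ : Fin (k + 1) => s) +
        ∑ i : Fin k, eulerZagierZeta (Function.update (fun _ : Fin k => s) i (2 * s)) := by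
  have hF := summable_zetaProductTerm (k := k) hs
  rw [eulerZagierZeta_mul_riemannZeta_eq_tsum hs,
    tsum_congr (indicator_strictMono_fst_eq_sum (zetaProductTerm s)),
    Summable.tsum_add (summable_sum fun i _ => hF.indicator _)
      (summable_sum fun i _ => hF.indicator _),
    Summable.tsum_finsetSum fun i _ => hF.indicator _,
    Summable.tsum_finsetSum fun i _ => hF.indicator _]
  simp only [← eulerZagierZeta_succ_eq_tsum_insertNth, ← eulerZagierZeta_update_eq_tsum,
    sum_const, card_univ, Fintype.card_fin, nsmul_eq_mul]
  push_cast
  ring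

/-- For `r = k + 1 ≥ 2` and `Re s > 1`:
`ζ_{r-1}(s,…,s) ζ(s) = r ζ_r(s,…,s) + ∑_{i=1}^{r-1} ζ_{r-1}(s,…,s,2s,s,…,s)`,
where in the `i`-th summand the argument `2s` occupies the `i`-th position. -/
theorem statement6 (k : ℕ) (hk : 1 ≤ k) (s : ℂ) (hs : 1 < s.re) :
    eulerZagierZeta (fun _ : Fin k => s) * riemannZeta s =
      ((k : ℂ) + 1) * eulerZagierZeta (fun _ : Fin (k + 1) => s) +
        ∑ i : Fin k, eulerZagierZeta (Function.update (fun _ : Fin k => s) i (2 * s)) :=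
  statement6_general k s hs
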